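/- Suppose the excess loss r is σ-sub-Gaussian under P_W ⊗ μ, i.e. log ∫ exp(λ·(r − ∫ r d(P_W ⊗ μ))) d(P_W ⊗ μ) ≤ λ²σ²/2 for every λ ∈ ℝ. Then the expected generalization error satisfies gen ≤ (1/n) ∑_{i=1}^n √(2σ²·I(W;Z_i)), and the expected excess risk satisfies R ≤ R̂ + (1/n) ∑_{i=1}^n √(2σ²·I(W;Z_i)). -/

import Mathlib

open MeasureTheory Real

/-- Real-valued Kullback–Leibler divergence `D(P‖Q)`,
the integral of the log-likelihood ratio with respect to `P`. -/
noncomputable def klReal {α : Type*} [MeasurableSpace α] (P Q : Measure α) : ℝ :=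
  ∫ x, llr P Q x ∂P

variable {W Z : Type*} [MeasurableSpace W] [MeasurableSpace Z]

/-- Population risk `L(w) = ∫ ℓ(w,z) dμ(z)`. -/
noncomputable def popRisk (μ : Measure Z) (ℓ : W × Z → ℝ) (w : W) : ℝ :=
  ∫ z, ℓ (w, z) ∂μ

/-- Empirical risk `L̂(w,s) = (1/n) ∑ i, ℓ(w, s i)`. -/
noncomputable def empRisk (n : ℕ) (ℓ : W × Z → ℝ) (w : W) (s : Fin n → Z) : ℝ :=
  (1 / (n : ℝ)) * ∑ i, ℓ (w, s i)

/-- Expected generalization error `gen = E_P[L(W) − L̂(W,S_n)]`. -/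
noncomputable def genErr (μ : Measure Z) (n : ℕ) (P : Measure (W × (Fin n → Z)))
    (ℓ : W × Z → ℝ) : ℝ :=
  ∫ p, (popRisk μ ℓ p.1 - empRisk n ℓ p.1 p.2) ∂P

/-- Expected empirical excess risk `R̂ = E_P[L̂(W,S_n) − L̂(w*,S_n)]`. -/
noncomputable def empExcess (n : ℕ) (P : Measure (W × (Fin n → Z)))
    (ℓ : W × Z → ℝ) (wstar : W) : ℝ :=
  ∫ p, (empRisk n ℓ p.1 p.2 - empRisk n ℓ wstar p.2) ∂P

/-- Expected excess risk `R = ∫ r d(P_W ⊗ μ)` where `r(w,z) = ℓ(w,z) − ℓ(w*,z)`. -/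
noncomputable def excessRisk (μ : Measure Z) {n : ℕ} (P : Measure (W × (Fin n → Z)))
    (ℓ : W × Z → ℝ) (wstar : W) : ℝ :=
  ∫ p, (ℓ p - ℓ (wstar, p.2)) ∂((P.map Prod.fst).prod μ)

/-- Joint law `P_i` of `(W, Z_i)`: the pushforward of `P` under `(w,z) ↦ (w, z_i)`. -/
noncomputable def jointLaw {n : ℕ} (P : Measure (W × (Fin n → Z))) (i : Fin n) :
    Measure (W × Z) :=
  P.map fun p => (p.1, p.2 i)

/-- Mutual information `I(W;Z_i) = D(P_i ‖ P_W ⊗ μ)`. -/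
noncomputable def mutInfo (μ : Measure Z) {n : ℕ} (P : Measure (W × (Fin n → Z)))
    (i : Fin n) : ℝ :=
  klReal (jointLaw P i) ((P.map Prod.fst).prod μ)

/-!
For each `i`, the Donsker–Varadhan formula bounds the mean of `λ r` under the joint law `P_i`
of `(W, Z_i)` by `I(W;Z_i)` plus the cumulant generating function of `r` under `P_W ⊗ μ`, which
sub-Gaussianity bounds by `λ²σ²/2`; optimizing over `λ` bounds the gap between the means of `r`
under `P_W ⊗ μ` and under `P_i` by `√(2σ² I(W;Z_i))`. Since every `Z_i` has law `μ`, the terms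
involving `w*` cancel, so the generalization error is the average of these gaps and `R - R̂` equals
the generalization error.
-/

open ProbabilityTheory InformationTheory

section DonskerVaradhan

variable {α : Type*} [MeasurableSpace α] {P Q : Measure α} [IsProbabilityMeasure P]

/-- Donsker–Varadhan: Gibbs' inequality for `P` against the tilted measure `Q.tilted f`. -/
theorem integral_le_klReal_add_log_integral_exp [SigmaFinite Q] (hPQ : P ≪ Q)
    (hllr : Integrable (llr P Q) P) {f : α → ℝ} (hfP : Integrable f P)
    (hfQ : Integrable (fun x ↦ exp (f x)) Q) :
    ∫ x, f x ∂P ≤ klReal P Q + log (∫ x, exp (f x) ∂Q) := by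
  have : NeZero Q := ⟨fun hQ ↦ NeZero.ne P (Measure.absolutelyContinuous_zero_iff.mp (hQ ▸ hPQ))⟩
  have := isProbabilityMeasure_tilted hfQ
  have gibbs := integral_llr_add_sub_measure_univ_nonneg
    (hPQ.trans (absolutelyContinuous_tilted hfQ)) (integrable_llr_tilted_right hPQ hfP hllr hfQ)
  rw [integral_llr_tilted_right hPQ hfP hfQ hllr] at gibbs
  simp only [probReal_univ] at gibbs
  rw [klReal]
  linarith

lemma le_sqrt_of_forall_mul_le {b c σ : ℝ} (h : ∀ t : ℝ, t * b ≤ c + t ^ 2 * σ ^ 2 / 2) :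
    b ≤ √(2 * σ ^ 2 * c) := by
  have hdisc : discrim (σ ^ 2 / 2) (-b) c ≤ 0 := discrim_le_zero fun t ↦ by nlinarith [h t]
  rw [discrim] at hdisc
  calc b ≤ √(b ^ 2) := by rw [sqrt_sq_eq_abs]; exact le_abs_self b
    _ ≤ √(2 * σ ^ 2 * c) := sqrt_le_sqrt (by linarith)

theorem integral_sub_integral_le_sqrt_klReal_of_cgf_le [SigmaFinite Q] (hPQ : P ≪ Q)
    (hllr : Integrable (llr P Q) P) {f : α → ℝ} (hfP : Integrable f P) {σ : ℝ}
    (hexp : ∀ t : ℝ, Integrable (fun x ↦ exp (t * (f x - ∫ y, f y ∂Q))) Q)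
    (hcgf : ∀ t : ℝ, cgf (fun x ↦ f x - ∫ y, f y ∂Q) Q t ≤ t ^ 2 * σ ^ 2 / 2) :
    ∫ x, f x ∂Q - ∫ x, f x ∂P ≤ √(2 * σ ^ 2 * klReal P Q) := by
  refine le_sqrt_of_forall_mul_le fun t ↦ ?_
  have hg : Integrable (fun x ↦ -t * (f x - ∫ y, f y ∂Q)) P :=
    (hfP.sub (integrable_const _)).const_mul (-t)
  have hdv := integral_le_klReal_add_log_integral_exp hPQ hllr hg (hexp (-t))
  rw [integral_const_mul, integral_sub hfP (integrable_const _), integral_const,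
    probReal_univ, one_smul] at hdv
  have := hcgf (-t)
  rw [cgf, mgf] at this
  nlinarith

end DonskerVaradhan

theorem MeasureTheory.MeasurePreserving.integral_comp_of_aestronglyMeasurable
    {α β E : Type*} [MeasurableSpace α] [MeasurableSpace β] [NormedAddCommGroup E]
    [NormedSpace ℝ E] {μ : Measure α} {ν : Measure β} {f : α → β} (hf : MeasurePreserving f μ ν)
    {g : β → E} (hg : AEStronglyMeasurable g ν) :
    ∫ x, g (f x) ∂μ = ∫ y, g y ∂ν := by
  rw [← hf.map_eq] at hg ⊢
  exact (integral_map hf.measurable.aemeasurable hg).symm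

section Learning

variable {μ : Measure Z} {n : ℕ} {P : Measure (W × (Fin n → Z))} {ℓ : W × Z → ℝ}

lemma measurePreserving_jointLaw (P : Measure (W × (Fin n → Z))) (i : Fin n) :
    MeasurePreserving (fun p ↦ (p.1, p.2 i)) P (jointLaw P i) :=
  ⟨by fun_prop, rfl⟩

instance isProbabilityMeasure_jointLaw [IsProbabilityMeasure P] (i : Fin n) :
    IsProbabilityMeasure (jointLaw P i) :=
  Measure.isProbabilityMeasure_map (measurePreserving_jointLaw P i).measurable.aemeasurable

lemma integral_excessLoss_eq_sub_popRisk {ρ : Measure (W × Z)} (hρ : MeasurePreserving Prod.snd ρ μ)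
    (hℓρ : Integrable ℓ ρ) {wstar : W} (hintw : Integrable (fun z ↦ ℓ (wstar, z)) μ) :
    ∫ q, (ℓ q - ℓ (wstar, q.2)) ∂ρ = ∫ q, ℓ q ∂ρ - popRisk μ ℓ wstar := by
  have hw : Integrable (fun q : W × Z ↦ ℓ (wstar, q.2)) ρ := hρ.integrable_comp_of_integrable hintw
  rw [integral_sub hℓρ hw, hρ.integral_comp_of_aestronglyMeasurable hintw.aestronglyMeasurable,
    popRisk]

variable [IsProbabilityMeasure μ]

lemma measurePreserving_eval_snd (hmarg : P.map Prod.snd = Measure.pi fun _ : Fin n ↦ μ)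
    (i : Fin n) : MeasurePreserving (fun p ↦ p.2 i) P μ :=
  (measurePreserving_eval (fun _ ↦ μ) i).comp ⟨measurable_snd, hmarg⟩

lemma measurePreserving_snd_jointLaw (hmarg : P.map Prod.snd = Measure.pi fun _ : Fin n ↦ μ)
    (i : Fin n) : MeasurePreserving Prod.snd (jointLaw P i) μ :=
  ⟨measurable_snd, by
    rw [jointLaw, Measure.map_map measurable_snd (measurePreserving_jointLaw P i).measurable]
    exact (measurePreserving_eval_snd hmarg i).map_eq⟩

lemma integrable_popRisk_fst (hint : Integrable ℓ ((P.map Prod.fst).prod μ)) :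
    Integrable (fun p ↦ popRisk μ ℓ p.1) P :=
  (integrable_map_measure hint.integral_prod_left.1 measurable_fst.aemeasurable).mp
    hint.integral_prod_left

lemma integral_popRisk_fst [IsFiniteMeasure P] (hint : Integrable ℓ ((P.map Prod.fst).prod μ)) :
    ∫ p, popRisk μ ℓ p.1 ∂P = ∫ q, ℓ q ∂((P.map Prod.fst).prod μ) := by
  rw [integral_prod ℓ hint]
  exact (integral_map measurable_fst.aemeasurable hint.integral_prod_left.1).symm

lemma integrable_empRisk {g : W × (Fin n → Z) → W}
    (h : ∀ i, Integrable (fun p ↦ ℓ (g p, p.2 i)) P) :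
    Integrable (fun p ↦ empRisk n ℓ (g p) p.2) P :=
  (integrable_finsetSum _ fun i _ ↦ h i).const_mul _

lemma integral_empRisk {g : W × (Fin n → Z) → W}
    (h : ∀ i, Integrable (fun p ↦ ℓ (g p, p.2 i)) P) :
    ∫ p, empRisk n ℓ (g p) p.2 ∂P = (1 / (n : ℝ)) * ∑ i, ∫ p, ℓ (g p, p.2 i) ∂P := by
  simp only [empRisk]
  rw [integral_const_mul, integral_finsetSum _ fun i _ ↦ h i]

lemma genErr_eq [IsFiniteMeasure P] (hint : Integrable ℓ ((P.map Prod.fst).prod μ))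
    (hinti : ∀ i, Integrable ℓ (jointLaw P i)) :
    genErr μ n P ℓ = ∫ q, ℓ q ∂((P.map Prod.fst).prod μ) -
      1 / (n : ℝ) * ∑ i, ∫ q, ℓ q ∂(jointLaw P i) := by
  have hi : ∀ i, Integrable (fun p ↦ ℓ (p.1, p.2 i)) P := fun i ↦
    (measurePreserving_jointLaw P i).integrable_comp_of_integrable (hinti i)
  rw [genErr, integral_sub (integrable_popRisk_fst hint) (integrable_empRisk hi),
    integral_popRisk_fst hint, integral_empRisk hi]
  simp_rw [fun i ↦ (measurePreserving_jointLaw P i).integral_comp_of_aestronglyMeasurable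
    (hinti i).aestronglyMeasurable]

lemma empExcess_eq (hn : n ≠ 0) (hmarg : P.map Prod.snd = Measure.pi fun _ : Fin n ↦ μ)
    (hinti : ∀ i, Integrable ℓ (jointLaw P i)) {wstar : W}
    (hintw : Integrable (fun z ↦ ℓ (wstar, z)) μ) :
    empExcess n P ℓ wstar = 1 / (n : ℝ) * ∑ i, ∫ q, ℓ q ∂(jointLaw P i) - popRisk μ ℓ wstar := by
  have hi : ∀ i, Integrable (fun p ↦ ℓ (p.1, p.2 i)) P := fun i ↦
    (measurePreserving_jointLaw P i).integrable_comp_of_integrable (hinti i)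
  have hiw : ∀ i, Integrable (fun p ↦ ℓ (wstar, p.2 i)) P := fun i ↦
    (measurePreserving_eval_snd hmarg i).integrable_comp_of_integrable hintw
  rw [empExcess, integral_sub (integrable_empRisk hi) (integrable_empRisk hiw),
    integral_empRisk hi, integral_empRisk hiw]
  simp_rw [fun i ↦ (measurePreserving_jointLaw P i).integral_comp_of_aestronglyMeasurable
      (hinti i).aestronglyMeasurable,
    fun i ↦ (measurePreserving_eval_snd hmarg i).integral_comp_of_aestronglyMeasurable
      hintw.aestronglyMeasurable]
  simp [popRisk, hn]

lemma genErr_eq_mean_sub_integral_jointLaw [IsProbabilityMeasure P] (hn : n ≠ 0)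
    (hmarg : P.map Prod.snd = Measure.pi fun _ : Fin n ↦ μ)
    (hint : Integrable ℓ ((P.map Prod.fst).prod μ)) (hinti : ∀ i, Integrable ℓ (jointLaw P i))
    {wstar : W} (hintw : Integrable (fun z ↦ ℓ (wstar, z)) μ) :
    genErr μ n P ℓ = 1 / (n : ℝ) *
      ∑ i, (excessRisk μ P ℓ wstar - ∫ q, (ℓ q - ℓ (wstar, q.2)) ∂(jointLaw P i)) := by
  have : IsProbabilityMeasure (P.map Prod.fst) := Measure.isProbabilityMeasure_map (by fun_prop)
  rw [genErr_eq hint hinti, excessRisk,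
    integral_excessLoss_eq_sub_popRisk measurePreserving_snd hint hintw]
  simp_rw [fun i ↦ integral_excessLoss_eq_sub_popRisk (measurePreserving_snd_jointLaw hmarg i)
    (hinti i) hintw]
  simp only [sub_sub_sub_cancel_right, Finset.sum_sub_distrib, Finset.sum_const, Finset.card_univ,
    Fintype.card_fin, nsmul_eq_mul]
  field_simp

lemma excessRisk_eq_empExcess_add_genErr [IsProbabilityMeasure P] (hn : n ≠ 0)
    (hmarg : P.map Prod.snd = Measure.pi fun _ : Fin n ↦ μ)
    (hint : Integrable ℓ ((P.map Prod.fst).prod μ)) (hinti : ∀ i, Integrable ℓ (jointLaw P i))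
    {wstar : W} (hintw : Integrable (fun z ↦ ℓ (wstar, z)) μ) :
    excessRisk μ P ℓ wstar = empExcess n P ℓ wstar + genErr μ n P ℓ := by
  have : IsProbabilityMeasure (P.map Prod.fst) := Measure.isProbabilityMeasure_map (by fun_prop)
  rw [excessRisk, integral_excessLoss_eq_sub_popRisk measurePreserving_snd hint hintw,
    empExcess_eq hn hmarg hinti hintw, genErr_eq hint hinti]
  ring

end Learning

theorem subGaussian_excess_loss_bound_general
    (μ : Measure Z) [IsProbabilityMeasure μ] (n : ℕ) (hn : 0 < n)
    (P : Measure (W × (Fin n → Z))) [IsProbabilityMeasure P]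
    (hmarg : P.map Prod.snd = Measure.pi fun _ : Fin n => μ)
    (ℓ : W × Z → ℝ) (wstar : W)
    (hint : Integrable ℓ ((P.map Prod.fst).prod μ))
    (hinti : ∀ i : Fin n, Integrable ℓ (jointLaw P i))
    (hintw : Integrable (fun z => ℓ (wstar, z)) μ)
    (hac : ∀ i : Fin n, jointLaw P i ≪ (P.map Prod.fst).prod μ)
    (hIfin : ∀ i : Fin n, Integrable (llr (jointLaw P i) ((P.map Prod.fst).prod μ))
      (jointLaw P i))
    (σ : ℝ)
    (hsubInt : ∀ lam : ℝ,
      Integrable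
        (fun p => Real.exp (lam * ((ℓ p - ℓ (wstar, p.2)) - excessRisk μ P ℓ wstar)))
        ((P.map Prod.fst).prod μ))
    (hsub : ∀ lam : ℝ,
      Real.log (∫ p, Real.exp (lam * ((ℓ p - ℓ (wstar, p.2)) - excessRisk μ P ℓ wstar))
          ∂((P.map Prod.fst).prod μ)) ≤ lam ^ 2 * σ ^ 2 / 2) :
    genErr μ n P ℓ ≤
      (1 / (n : ℝ)) * ∑ i : Fin n, Real.sqrt (2 * σ ^ 2 * mutInfo μ P i) ∧
    excessRisk μ P ℓ wstar ≤
      empExcess n P ℓ wstar +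
        (1 / (n : ℝ)) * ∑ i : Fin n, Real.sqrt (2 * σ ^ 2 * mutInfo μ P i) := by
  have : IsProbabilityMeasure (P.map Prod.fst) := Measure.isProbabilityMeasure_map (by fun_prop)
  have transport : ∀ i, excessRisk μ P ℓ wstar - ∫ q, (ℓ q - ℓ (wstar, q.2)) ∂(jointLaw P i) ≤
      √(2 * σ ^ 2 * mutInfo μ P i) := fun i ↦
    integral_sub_integral_le_sqrt_klReal_of_cgf_le (hac i) (hIfin i)
      ((hinti i).sub ((measurePreserving_snd_jointLaw hmarg i).integrable_comp_of_integrable hintw))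
      hsubInt hsub
  have hgen : genErr μ n P ℓ ≤ 1 / (n : ℝ) * ∑ i, √(2 * σ ^ 2 * mutInfo μ P i) := by
    rw [genErr_eq_mean_sub_integral_jointLaw hn.ne' hmarg hint hinti hintw]
    gcongr with i
    exact transport i
  rw [excessRisk_eq_empExcess_add_genErr hn.ne' hmarg hint hinti hintw]
  exact ⟨hgen, by linarith⟩

theorem subGaussian_excess_loss_bound
    (μ : Measure Z) [IsProbabilityMeasure μ] (n : ℕ) (hn : 0 < n)
    (P : Measure (W × (Fin n → Z))) [IsProbabilityMeasure P]
    (hmarg : P.map Prod.snd = Measure.pi fun _ : Fin n => μ)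
    (ℓ : W × Z → ℝ) (hℓ : Measurable ℓ) (wstar : W)
    (hint : Integrable ℓ ((P.map Prod.fst).prod μ))
    (hinti : ∀ i : Fin n, Integrable ℓ (jointLaw P i))
    (hintw : Integrable (fun z => ℓ (wstar, z)) μ)
    (hac : ∀ i : Fin n, jointLaw P i ≪ (P.map Prod.fst).prod μ)
    (hIfin : ∀ i : Fin n, Integrable (llr (jointLaw P i) ((P.map Prod.fst).prod μ))
      (jointLaw P i))
    (σ : ℝ)
    (hsubInt : ∀ lam : ℝ,
      Integrable
        (fun p => Real.exp (lam * ((ℓ p - ℓ (wstar, p.2)) - excessRisk μ P ℓ wstar)))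
        ((P.map Prod.fst).prod μ))
    (hsub : ∀ lam : ℝ,
      Real.log (∫ p, Real.exp (lam * ((ℓ p - ℓ (wstar, p.2)) - excessRisk μ P ℓ wstar))
          ∂((P.map Prod.fst).prod μ)) ≤ lam ^ 2 * σ ^ 2 / 2) :
    genErr μ n P ℓ ≤
      (1 / (n : ℝ)) * ∑ i : Fin n, Real.sqrt (2 * σ ^ 2 * mutInfo μ P i) ∧
    excessRisk μ P ℓ wstar ≤
      empExcess n P ℓ wstar +
        (1 / (n : ℝ)) * ∑ i : Fin n, Real.sqrt (2 * σ ^ 2 * mutInfo μ P i) :=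
  subGaussian_excess_loss_bound_general μ n hn P hmarg ℓ wstar hint hinti hintw hac hIfin σ hsubInt
    hsub
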